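/- arXiv:1606.03898 — 2 statements merged into one kernel-verified Lean document; each statement's English description precedes it below -/
import Mathlib

section
/- Let V be a finite set with |V| = n ≥ 3. Then there exists a network N on V whose flow relation 𝔉(N) is not transitive (hence 𝔉(N) is not an order). -/
/-- A flow from `s` to `t` in the network with capacity `c`: bounded by the
capacity on every arc and conserving flow at every vertex other than `s`, `t`. -/
def IsFlow {V : Type*} [Fintype V] [DecidableEq V]
    (c : V → V → ℕ) (s t : V) (f : V → V → ℕ) : Prop :=
  (∀ x y : V, x ≠ y → f x y ≤ c x y) ∧
  ∀ x : V, x ≠ s → x ≠ t →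
    ∑ y ∈ Finset.univ.erase x, f x y = ∑ y ∈ Finset.univ.erase x, f y x

/-- The value of a flow `f` from `s`: outflow of `s` minus inflow of `s`. -/
def flowValue {V : Type*} [Fintype V] [DecidableEq V]
    (f : V → V → ℕ) (s : V) : ℤ :=
  (∑ y ∈ Finset.univ.erase s, (f s y : ℤ)) -
    ∑ y ∈ Finset.univ.erase s, (f y s : ℤ)

/-- The maximum flow value `φ_{st}` from `s` to `t` in the network `c`. -/
noncomputable def maxFlow {V : Type*} [Fintype V] [DecidableEq V]
    (c : V → V → ℕ) (s t : V) : ℕ :=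
  sSup {n : ℕ | ∃ f : V → V → ℕ, IsFlow c s t f ∧ flowValue f s = (n : ℤ)}

/-- The flow relation `𝔉(N)`: `x ⪰ y` iff `x = y` or `x ≠ y` and `φ_{xy} ≥ φ_{yx}`. -/
def FlowRel {V : Type*} [Fintype V] [DecidableEq V]
    (c : V → V → ℕ) (x y : V) : Prop :=
  x = y ∨ (x ≠ y ∧ maxFlow c y x ≤ maxFlow c x y)

/-- A relation is complete if any two elements are comparable. -/
def CompleteRel {V : Type*} (R : V → V → Prop) : Prop :=
  ∀ x y : V, R x y ∨ R y x

/-- The strict part `S(R)` of a relation `R`. -/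
def StrictPart {V : Type*} (R : V → V → Prop) (x y : V) : Prop :=
  R x y ∧ ¬ R y x

/-- A relation is quasi-transitive if its strict part is transitive. -/
def QuasiTransitive {V : Type*} (R : V → V → Prop) : Prop :=
  Transitive (StrictPart R)

/-- The outdegree of `x` in the network `c`. -/
def outdeg {V : Type*} [Fintype V] [DecidableEq V] (c : V → V → ℕ) (x : V) : ℕ :=
  ∑ y ∈ Finset.univ.erase x, c x y

/-- The indegree of `x` in the network `c`. -/
def indeg {V : Type*} [Fintype V] [DecidableEq V] (c : V → V → ℕ) (x : V) : ℕ :=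
  ∑ y ∈ Finset.univ.erase x, c y x

/-!
Take the network with a single arc `d → a` of capacity `1`. A flow value is bounded by the
outdegree of the source and by the indegree of the sink, so every maximum flow vanishes except
`φ_{da} = 1`. Hence `a ⪰ b` and `b ⪰ d` hold as ties, while `d ≻ a` strictly.
-/

section Flows

open Finset

variable {V : Type*} [Fintype V] [DecidableEq V]

section FlowValue

lemma sum_flowValue_eq_zero (f : V → V → ℕ) : ∑ x, flowValue f x = 0 := by
  simp only [flowValue, sum_sub_distrib, sum_erase_eq_sub (mem_univ _)]
  rw [sum_comm (f := fun x y => (f y x : ℤ))]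
  ring

variable {c : V → V → ℕ} {s t : V} {f : V → V → ℕ}

lemma IsFlow.flowValue_eq_zero (hf : IsFlow c s t f) {x : V} (hxs : x ≠ s) (hxt : x ≠ t) :
    flowValue f x = 0 := by
  rw [flowValue, sub_eq_zero, ← Nat.cast_sum, ← Nat.cast_sum, hf.2 x hxs hxt]

lemma IsFlow.flowValue_source_eq_neg_sink (hf : IsFlow c s t f) (hst : s ≠ t) :
    flowValue f s = -flowValue f t := by
  have hsum := sum_flowValue_eq_zero f
  rw [← add_sum_erase _ _ (mem_univ s), ← add_sum_erase _ _ (mem_erase.2 ⟨hst.symm, mem_univ t⟩),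
    sum_eq_zero fun x hx => hf.flowValue_eq_zero (ne_of_mem_erase (mem_of_mem_erase hx))
      (ne_of_mem_erase hx)] at hsum
  linarith

lemma IsFlow.flowValue_le_outdeg (hf : IsFlow c s t f) : flowValue f s ≤ outdeg c s := by
  have hout : ∑ y ∈ univ.erase s, (f s y : ℤ) ≤ ∑ y ∈ univ.erase s, (c s y : ℤ) :=
    sum_le_sum fun y hy => by exact_mod_cast hf.1 s y (ne_of_mem_erase hy).symm
  have hin : 0 ≤ ∑ y ∈ univ.erase s, (f y s : ℤ) := sum_nonneg fun _ _ => by positivity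
  rw [flowValue, outdeg, Nat.cast_sum]
  linarith

lemma IsFlow.flowValue_le_indeg (hf : IsFlow c s t f) (hst : s ≠ t) :
    flowValue f s ≤ indeg c t := by
  have hin : ∑ y ∈ univ.erase t, (f y t : ℤ) ≤ ∑ y ∈ univ.erase t, (c y t : ℤ) :=
    sum_le_sum fun y hy => by exact_mod_cast hf.1 y t (ne_of_mem_erase hy)
  have hout : 0 ≤ ∑ y ∈ univ.erase t, (f t y : ℤ) := sum_nonneg fun _ _ => by positivity
  rw [hf.flowValue_source_eq_neg_sink hst, flowValue, indeg, Nat.cast_sum]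
  linarith

end FlowValue

section MaxFlow

variable (c : V → V → ℕ) (s t : V)

lemma isFlow_zero : IsFlow c s t fun _ _ => 0 :=
  ⟨fun _ _ _ => Nat.zero_le _, fun _ _ _ => rfl⟩

lemma maxFlow_le {B : ℕ} (hB : ∀ f, IsFlow c s t f → flowValue f s ≤ B) : maxFlow c s t ≤ B := by
  refine csSup_le ⟨0, _, isFlow_zero c s t, by simp [flowValue]⟩ ?_
  rintro n ⟨f, hf, hv⟩
  exact_mod_cast hv ▸ hB f hf

lemma maxFlow_le_outdeg : maxFlow c s t ≤ outdeg c s :=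
  maxFlow_le c s t fun _ hf => hf.flowValue_le_outdeg

lemma maxFlow_le_indeg (hst : s ≠ t) : maxFlow c s t ≤ indeg c t :=
  maxFlow_le c s t fun _ hf => hf.flowValue_le_indeg hst

lemma le_maxFlow {f : V → V → ℕ} (hf : IsFlow c s t f) {n : ℕ} (hv : flowValue f s = n) :
    n ≤ maxFlow c s t := by
  refine le_csSup ⟨outdeg c s, ?_⟩ ⟨f, hf, hv⟩
  rintro m ⟨g, hg, hvg⟩
  exact_mod_cast hvg ▸ hg.flowValue_le_outdeg

end MaxFlow

section ArcNetwork

def arcNetwork (u v : V) : V → V → ℕ := fun x y => if x = u ∧ y = v then 1 else 0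

variable {u v : V}

lemma outdeg_arcNetwork_of_ne {x : V} (hx : x ≠ u) : outdeg (arcNetwork u v) x = 0 :=
  sum_eq_zero fun _ _ => if_neg fun h => hx h.1

lemma indeg_arcNetwork_of_ne {x : V} (hx : x ≠ v) : indeg (arcNetwork u v) x = 0 :=
  sum_eq_zero fun _ _ => if_neg fun h => hx h.2

lemma isFlow_arcNetwork : IsFlow (arcNetwork u v) u v (arcNetwork u v) :=
  ⟨fun _ _ _ => le_rfl, fun _ hxu hxv => by
    rw [← outdeg, ← indeg, outdeg_arcNetwork_of_ne hxu, indeg_arcNetwork_of_ne hxv]⟩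

lemma one_le_maxFlow_arcNetwork (huv : u ≠ v) : 1 ≤ maxFlow (arcNetwork u v) u v := by
  refine le_maxFlow _ u v isFlow_arcNetwork ?_
  simp [flowValue, arcNetwork, huv, huv.symm]

end ArcNetwork

end Flows

/-- If `|V| ≥ 3`, there is a network on `V` whose flow relation is not
transitive (hence not an order). -/
theorem stmt3 {V : Type*} [Fintype V] [DecidableEq V]
    (hV : 3 ≤ Fintype.card V) :
    ∃ c : V → V → ℕ, ¬ Transitive (FlowRel c) := by
  obtain ⟨a, b, d, hab, had, hbd⟩ := Fintype.two_lt_card_iff.1 hV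
  refine ⟨arcNetwork d a, fun htrans => ?_⟩
  have hba : maxFlow (arcNetwork d a) b a = 0 :=
    Nat.eq_zero_of_le_zero <| (maxFlow_le_outdeg _ b a).trans_eq (outdeg_arcNetwork_of_ne hbd)
  have hdb : maxFlow (arcNetwork d a) d b = 0 :=
    Nat.eq_zero_of_le_zero <| (maxFlow_le_indeg _ d b hbd.symm).trans_eq
      (indeg_arcNetwork_of_ne hab.symm)
  have had0 : maxFlow (arcNetwork d a) a d = 0 :=
    Nat.eq_zero_of_le_zero <| (maxFlow_le_outdeg _ a d).trans_eq (outdeg_arcNetwork_of_ne had)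
  have hda := one_le_maxFlow_arcNetwork had.symm
  have hrel : FlowRel (arcNetwork d a) a d :=
    htrans (Or.inr ⟨hab, hba ▸ Nat.zero_le _⟩) (Or.inr ⟨hbd, hdb ▸ Nat.zero_le _⟩)
  rcases hrel with h | ⟨-, h⟩
  · exact had h
  · omega
end

section
/- Let N = (V,A,c) be a network on a finite set V with |V| ≥ 2. Assume N belongs to at least one of the following classes: (1) N is balanced, i.e., there is k ∈ ℕ₀ with c(x,y) + c(y,x) = k for all arcs; (2) there is ω₁ : V → ℕ₀ with c(x,y) = ω₁(x) for all arcs (x,y); (3) there is ω₂ : V → ℕ₀ with c(x,y) = ω₂(y) for all arcs (x,y). Then the flow relation, the Borda relation and the dual Borda relation of N coincide: 𝔉(N) = 𝔅(N) = 𝔅̂(N). -/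
/-!
By max-flow min-cut, `φ_{st}` is the capacity of a minimum `s`–`t` cut `S`. Exchanging `s` for
`t` turns `S` into a `t`–`s` cut, and in each of the three classes of networks this changes its
capacity by a positive multiple of `o(t) - o(s)`. Hence `φ_{ts} ≤ φ_{st}` when `o(t) ≤ o(s)`,
and `φ_{ts} < φ_{st}` when `o(t) < o(s)`. In each class the indegree is moreover a decreasing
affine function of the outdegree.
-/

open Finset

theorem Relation.ReflTransGen.eq_or_exists_avoiding {α : Type*} {r : α → α → Prop} {a b : α}
    (h : Relation.ReflTransGen r a b) :
    a = b ∨ ∃ c, r a c ∧ Relation.ReflTransGen (fun x y => r x y ∧ x ≠ a ∧ y ≠ a) c b := by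
  induction h with
  | refl => exact .inl rfl
  | @tail v u _ hvu ih =>
    by_cases hu : u = a
    · exact .inl hu.symm
    by_cases hv : v = a
    · exact .inr ⟨u, hv ▸ hvu, .refl⟩
    rcases ih with rfl | ⟨c, hac, hcv⟩
    · exact absurd rfl hv
    · exact .inr ⟨c, hac, hcv.tail ⟨hvu, hv, hu⟩⟩

section Augmentation

variable {V : Type*} [DecidableEq V] {c f : V → V → ℕ}

def WithinCapacity (c f : V → V → ℕ) : Prop := ∀ x y, x ≠ y → f x y ≤ c x y

def ResidualArc (c f : V → V → ℕ) (u w : V) : Prop := f u w < c u w ∨ 0 < f w u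

def augmentArc (f : V → V → ℕ) (u w : V) : V → V → ℕ := fun a b =>
  if 0 < f w u then (if a = w ∧ b = u then f a b - 1 else f a b)
  else (if a = u ∧ b = w then f a b + 1 else f a b)

lemma WithinCapacity.augmentArc {u w : V} (hf : WithinCapacity c f) (h : ResidualArc c f u w) :
    WithinCapacity c (augmentArc f u w) := by
  intro a b hab
  have := hf a b hab
  unfold _root_.augmentArc
  split_ifs with hpos h' h' <;> try omega
  obtain ⟨rfl, rfl⟩ := h'
  have := h.resolve_right hpos
  omega

lemma augmentArc_of_ne {u w a b : V} (ha : a ≠ u) (hb : b ≠ u) :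
    augmentArc f u w a b = f a b := by
  unfold augmentArc
  split_ifs <;> simp_all

lemma residualArc_augmentArc_iff {u w a b : V} (ha : a ≠ u) (hb : b ≠ u) :
    ResidualArc c (augmentArc f u w) a b ↔ ResidualArc c f a b := by
  simp only [ResidualArc, augmentArc_of_ne ha hb, augmentArc_of_ne hb ha]

end Augmentation

section

variable {V : Type*} [Fintype V] [DecidableEq V] {c f g : V → V → ℕ} {s t : V}

lemma flowValue_eq_sum (f : V → V → ℕ) (x : V) :
    flowValue f x = ∑ y, ((f x y : ℤ) - f y x) := by
  rw [flowValue, ← sum_sub_distrib]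
  exact sum_erase _ (sub_self _)

lemma flowValue_eq_zero_iff {x : V} :
    flowValue f x = 0 ↔ ∑ y ∈ univ.erase x, f x y = ∑ y ∈ univ.erase x, f y x := by
  rw [flowValue, sub_eq_zero]
  exact_mod_cast Iff.rfl

lemma flowValue_eq_of_eq_add_ite {p q : V} (d : ℤ)
    (hg : ∀ a b, (g a b : ℤ) = f a b + if a = p ∧ b = q then d else 0) (z : V) :
    flowValue g z = flowValue f z + (if z = p then d else 0) - (if z = q then d else 0) := by
  simp only [flowValue_eq_sum, hg, add_sub_add_comm, sum_add_distrib, ite_and, sum_ite_eq',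
    sum_ite_irrel, mem_univ, if_true, sum_sub_distrib, sum_const_zero]
  ring

lemma flowValue_augmentArc (u w z : V) :
    flowValue (augmentArc f u w) z
      = flowValue f z + (if z = u then 1 else 0) - (if z = w then 1 else 0) := by
  by_cases hpos : 0 < f w u
  · rw [flowValue_eq_of_eq_add_ite (p := w) (q := u) (-1) _ z]
    · split_ifs <;> ring
    · intro a b
      simp only [augmentArc, if_pos hpos]
      split_ifs with h
      · obtain ⟨rfl, rfl⟩ := h; omega
      · simp
  · refine flowValue_eq_of_eq_add_ite 1 (fun a b => ?_) z
    simp only [augmentArc, if_neg hpos]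
    split_ifs <;> push_cast <;> ring

/-- Induction on the set `A` of allowed vertices: a residual path leaving `u` can be taken to
avoid `u` afterwards, so it survives the augmentation of its first arc. -/
lemma exists_augment {A : Finset V} {u w : V} (hf : WithinCapacity c f)
    (huw : Relation.ReflTransGen (fun x y => ResidualArc c f x y ∧ x ∈ A ∧ y ∈ A) u w) :
    ∃ g, WithinCapacity c g ∧ ∀ z, flowValue g z
      = flowValue f z + (if z = u then 1 else 0) - (if z = w then 1 else 0) := by
  induction A using Finset.strongInduction generalizing f u with
  | H A ih =>
  rcases huw.eq_or_exists_avoiding with rfl | ⟨b, ⟨hub, huA, -⟩, hbw⟩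
  · exact ⟨f, hf, fun z => by ring⟩
  have hpath : Relation.ReflTransGen
      (fun x y => ResidualArc c (augmentArc f u b) x y ∧ x ∈ A.erase u ∧ y ∈ A.erase u) b w :=
    Relation.ReflTransGen.mono (fun x y ⟨⟨hxy, hx, hy⟩, hxu, hyu⟩ =>
      ⟨(residualArc_augmentArc_iff hxu hyu).2 hxy, mem_erase.2 ⟨hxu, hx⟩,
        mem_erase.2 ⟨hyu, hy⟩⟩) _ _ hbw
  obtain ⟨g, hg, hgval⟩ := ih _ (erase_ssubset huA) (hf.augmentArc hub) hpath
  exact ⟨g, hg, fun z => by rw [hgval, flowValue_augmentArc]; ring⟩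

def cutCapacity (c : V → V → ℕ) (S : Finset V) : ℕ := ∑ u ∈ S, ∑ w ∈ Sᶜ, c u w

lemma IsFlow.flowValue_eq_sum_cut {S : Finset V} (hf : IsFlow c s t f) (hs : s ∈ S)
    (ht : t ∉ S) : flowValue f s = ∑ u ∈ S, ∑ w ∈ Sᶜ, ((f u w : ℤ) - f w u) := by
  have hconserve : ∑ u ∈ S, flowValue f u = flowValue f s :=
    sum_eq_single_of_mem s hs fun u hu hus =>
      flowValue_eq_zero_iff.2 (hf.2 u hus (ne_of_mem_of_not_mem hu ht))
  have hinside : ∑ u ∈ S, ∑ w ∈ S, ((f u w : ℤ) - f w u) = 0 := by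
    simp only [sum_sub_distrib]
    exact sub_eq_zero.2 sum_comm
  rw [← hconserve]
  simp_rw [flowValue_eq_sum, ← sum_add_sum_compl S]
  rw [sum_add_distrib, hinside, zero_add]

lemma IsFlow.flowValue_le_cutCapacity {S : Finset V} (hf : IsFlow c s t f) (hs : s ∈ S)
    (ht : t ∉ S) : flowValue f s ≤ cutCapacity c S := by
  rw [hf.flowValue_eq_sum_cut hs ht, cutCapacity]
  push_cast
  gcongr with u hu w hw
  have hfc : f u w ≤ c u w := hf.1 u w (ne_of_mem_of_not_mem hu (mem_compl.1 hw))
  linarith [Int.natCast_nonneg (f w u), Int.ofNat_le.2 hfc]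

lemma zero_mem_flowValues :
    0 ∈ {n : ℕ | ∃ f : V → V → ℕ, IsFlow c s t f ∧ flowValue f s = (n : ℤ)} :=
  ⟨_, ⟨fun _ _ _ => Nat.zero_le _, fun _ _ _ => rfl⟩, by simp [flowValue]⟩

lemma bddAbove_flowValues (hst : s ≠ t) :
    BddAbove {n : ℕ | ∃ f : V → V → ℕ, IsFlow c s t f ∧ flowValue f s = (n : ℤ)} :=
  ⟨cutCapacity c {s}, fun n ⟨f, hf, hn⟩ => by
    have := hf.flowValue_le_cutCapacity (mem_singleton_self s) (by simpa using hst.symm)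
    omega⟩

lemma maxFlow_le_cutCapacity {S : Finset V} (hs : s ∈ S) (ht : t ∉ S) :
    maxFlow c s t ≤ cutCapacity c S :=
  csSup_le ⟨0, zero_mem_flowValues⟩ fun n ⟨f, hf, hn⟩ => by
    have := hf.flowValue_le_cutCapacity hs ht
    omega

lemma exists_isFlow_flowValue_eq_maxFlow (hst : s ≠ t) :
    ∃ f, IsFlow c s t f ∧ flowValue f s = maxFlow c s t :=
  Nat.sSup_mem ⟨0, zero_mem_flowValues⟩ (bddAbove_flowValues hst)

/-- Max-flow min-cut: the vertices reachable from `s` along residual arcs of a maximum flow form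
a cut that the flow saturates. -/
theorem exists_cutCapacity_eq_maxFlow (hst : s ≠ t) :
    ∃ S, s ∈ S ∧ t ∉ S ∧ cutCapacity c S = maxFlow c s t := by
  classical
  obtain ⟨f, hf, hfmax⟩ := exists_isFlow_flowValue_eq_maxFlow (c := c) hst
  set S := univ.filter (Relation.ReflTransGen (ResidualArc c f) s)
  have hs : s ∈ S := mem_filter.2 ⟨mem_univ s, Relation.ReflTransGen.refl⟩
  have ht : t ∉ S := by
    intro htS
    obtain ⟨g, hg, hgval⟩ := exists_augment (A := univ) hf.1
      (Relation.ReflTransGen.mono (fun x y h => ⟨h, mem_univ x, mem_univ y⟩) _ _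
        (mem_filter.1 htS).2)
    have hgflow : IsFlow c s t g := ⟨hg, fun z hzs hzt => flowValue_eq_zero_iff.1 (by
      rw [hgval, if_neg hzs, if_neg hzt, flowValue_eq_zero_iff.2 (hf.2 z hzs hzt)]; ring)⟩
    have : maxFlow c s t + 1 ≤ maxFlow c s t := le_csSup (bddAbove_flowValues hst)
      ⟨g, hgflow, by rw [hgval, hfmax]; simp [hst]⟩
    omega
  have hsat : ∀ u ∈ S, ∀ w ∈ Sᶜ, f u w = c u w ∧ f w u = 0 := by
    intro u hu w hw
    have hw : w ∉ S := mem_compl.1 hw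
    have hreach := (mem_filter.1 hu).2
    have huw : u ≠ w := ne_of_mem_of_not_mem hu hw
    refine ⟨?_, ?_⟩ <;> by_contra h <;> refine hw (mem_filter.2 ⟨mem_univ w, hreach.tail ?_⟩)
    · exact .inl (lt_of_le_of_ne (hf.1 u w huw) h)
    · exact .inr (Nat.pos_of_ne_zero h)
  refine ⟨S, hs, ht, ?_⟩
  zify
  rw [← hfmax, hf.flowValue_eq_sum_cut hs ht, cutCapacity]
  push_cast
  refine sum_congr rfl fun u hu => sum_congr rfl fun w hw => ?_
  simp [hsat u hu w hw]

lemma cutCapacity_eq_outdeg_add {S : Finset V} (hs : s ∈ S) :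
    (cutCapacity c S : ℤ) = outdeg c s + ∑ u ∈ S.erase s, (∑ w ∈ Sᶜ, (c u w : ℤ) - c s u) := by
  have houtdeg : (outdeg c s : ℤ) = ∑ u ∈ S.erase s, (c s u : ℤ) + ∑ w ∈ Sᶜ, (c s w : ℤ) := by
    rw [outdeg]
    push_cast
    rw [sum_erase_eq_sub (mem_univ s), sum_erase_eq_sub hs, ← sum_add_sum_compl S]
    ring
  rw [houtdeg, cutCapacity, Nat.cast_sum, ← add_sum_erase S _ hs, sum_sub_distrib]
  push_cast
  ring

lemma cutCapacity_exchange {S : Finset V} (hs : s ∈ S) (ht : t ∉ S) :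
    (cutCapacity c (insert t (S.erase s)) : ℤ) - cutCapacity c S
      = (outdeg c t : ℤ) - outdeg c s
        + ∑ u ∈ S.erase s, ((c u s + c s u : ℤ) - (c u t + c t u)) := by
  have htT : t ∉ S.erase s := fun h => ht (mem_of_mem_erase h)
  have hcompl : ∀ u, ∑ w ∈ (insert t (S.erase s))ᶜ, (c u w : ℤ)
      = ∑ w ∈ Sᶜ, (c u w : ℤ) + c u s - c u t := by
    intro u
    have h' := sum_compl_add_sum (insert t (S.erase s)) fun w => (c u w : ℤ)
    have h := sum_compl_add_sum S fun w => (c u w : ℤ)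
    rw [sum_insert htT] at h'
    rw [← add_sum_erase S _ hs] at h
    linarith
  rw [cutCapacity_eq_outdeg_add (mem_insert_self t _), erase_insert htT,
    cutCapacity_eq_outdeg_add hs]
  simp_rw [hcompl]
  have hsplit : ∑ u ∈ S.erase s, (∑ w ∈ Sᶜ, (c u w : ℤ) + c u s - c u t - c t u)
      = ∑ u ∈ S.erase s, (∑ w ∈ Sᶜ, (c u w : ℤ) - c s u)
        + ∑ u ∈ S.erase s, ((c u s + c s u : ℤ) - (c u t + c t u)) := by
    rw [← sum_add_distrib]
    exact sum_congr rfl fun _ _ => by ring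
  rw [hsplit]
  ring

def ExchangeProportional (c : V → V → ℕ) : Prop :=
  ∀ ⦃S : Finset V⦄ ⦃s t : V⦄, s ∈ S → t ∉ S → ∃ α β : ℤ, 0 < α ∧ 0 < β ∧
    α * ((cutCapacity c (insert t (S.erase s)) : ℤ) - cutCapacity c S)
      = β * ((outdeg c t : ℤ) - outdeg c s)

lemma maxFlow_le_maxFlow_of_exchange (hst : s ≠ t)
    (h : ∀ S : Finset V, s ∈ S → t ∉ S → cutCapacity c (insert t (S.erase s)) ≤ cutCapacity c S) :
    maxFlow c t s ≤ maxFlow c s t := by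
  obtain ⟨S, hs, ht, hS⟩ := exists_cutCapacity_eq_maxFlow (c := c) hst
  calc maxFlow c t s ≤ cutCapacity c (insert t (S.erase s)) :=
        maxFlow_le_cutCapacity (mem_insert_self t _) (by simp [hst])
    _ ≤ cutCapacity c S := h S hs ht
    _ = maxFlow c s t := hS

lemma maxFlow_lt_maxFlow_of_exchange (hst : s ≠ t)
    (h : ∀ S : Finset V, s ∈ S → t ∉ S → cutCapacity c (insert t (S.erase s)) < cutCapacity c S) :
    maxFlow c t s < maxFlow c s t := by
  obtain ⟨S, hs, ht, hS⟩ := exists_cutCapacity_eq_maxFlow (c := c) hst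
  calc maxFlow c t s ≤ cutCapacity c (insert t (S.erase s)) :=
        maxFlow_le_cutCapacity (mem_insert_self t _) (by simp [hst])
    _ < cutCapacity c S := h S hs ht
    _ = maxFlow c s t := hS

lemma ExchangeProportional.cutCapacity_le (h : ExchangeProportional c) {S : Finset V}
    (hs : s ∈ S) (ht : t ∉ S) (hst : outdeg c t ≤ outdeg c s) :
    cutCapacity c (insert t (S.erase s)) ≤ cutCapacity c S := by
  obtain ⟨α, β, hα, hβ, hαβ⟩ := h hs ht
  have : α * ((cutCapacity c (insert t (S.erase s)) : ℤ) - cutCapacity c S) ≤ 0 := by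
    rw [hαβ]
    exact mul_nonpos_of_nonneg_of_nonpos hβ.le (by simpa using hst)
  have := nonpos_of_mul_nonpos_right this hα
  omega

lemma ExchangeProportional.cutCapacity_lt (h : ExchangeProportional c) {S : Finset V}
    (hs : s ∈ S) (ht : t ∉ S) (hst : outdeg c t < outdeg c s) :
    cutCapacity c (insert t (S.erase s)) < cutCapacity c S := by
  obtain ⟨α, β, hα, hβ, hαβ⟩ := h hs ht
  have : α * ((cutCapacity c (insert t (S.erase s)) : ℤ) - cutCapacity c S) < 0 := by
    rw [hαβ]
    exact mul_neg_of_pos_of_neg hβ (by simpa using hst)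
  have := neg_of_mul_neg_right this hα.le
  omega

theorem ExchangeProportional.flowRel_iff (h : ExchangeProportional c) (x y : V) :
    FlowRel c x y ↔ outdeg c y ≤ outdeg c x := by
  rcases eq_or_ne x y with rfl | hxy
  · simp [FlowRel]
  simp only [FlowRel, hxy, false_or, ne_eq, not_false_eq_true, true_and]
  refine ⟨fun hle => ?_, fun hle =>
    maxFlow_le_maxFlow_of_exchange hxy fun S hx hy => h.cutCapacity_le hx hy hle⟩
  by_contra! hlt
  exact (maxFlow_lt_maxFlow_of_exchange hxy.symm fun S hy hx =>
    h.cutCapacity_lt hy hx hlt).not_ge hle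

lemma cutCapacity_exchange_of_add {κ : ℤ} {ω : V → ℤ}
    (hc : ∀ x y, x ≠ y → (c x y : ℤ) + c y x = κ + ω x + ω y) {S : Finset V}
    (hs : s ∈ S) (ht : t ∉ S) :
    (cutCapacity c (insert t (S.erase s)) : ℤ) - cutCapacity c S
      = (outdeg c t : ℤ) - outdeg c s + ((S.card : ℤ) - 1) * (ω s - ω t) := by
  rw [cutCapacity_exchange hs ht, sum_congr rfl fun u hu => by
    rw [hc u s (ne_of_mem_erase hu), hc u t (ne_of_mem_of_not_mem (mem_of_mem_erase hu) ht)]]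
  simp [card_erase_of_mem hs, Nat.cast_sub (card_pos.2 ⟨s, hs⟩)]
  ring

lemma outdeg_add_indeg_of_balanced {k : ℕ} (hk : ∀ x y : V, x ≠ y → c x y + c y x = k)
    (x : V) : outdeg c x + indeg c x = (Fintype.card V - 1) * k := by
  rw [outdeg, indeg, ← sum_add_distrib, sum_congr rfl fun y hy => hk x y (ne_of_mem_erase hy).symm,
    sum_const, card_erase_of_mem (mem_univ x), card_univ, smul_eq_mul]

lemma exchangeProportional_of_balanced {k : ℕ} (hk : ∀ x y : V, x ≠ y → c x y + c y x = k) :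
    ExchangeProportional c := by
  intro S s t hs ht
  refine ⟨1, 1, one_pos, one_pos, ?_⟩
  rw [cutCapacity_exchange_of_add (κ := k) (ω := 0) (fun x y hxy => by
    simpa using congrArg (Nat.cast (R := ℤ)) (hk x y hxy)) hs ht]
  simp

lemma outdeg_eq_of_source {ω : V → ℕ} (hω : ∀ x y : V, x ≠ y → c x y = ω x) (x : V) :
    outdeg c x = (Fintype.card V - 1) * ω x := by
  rw [outdeg, sum_congr rfl fun y hy => hω x y (ne_of_mem_erase hy).symm,
    sum_const, card_erase_of_mem (mem_univ x), card_univ, smul_eq_mul]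

lemma indeg_add_of_source {ω : V → ℕ} (hω : ∀ x y : V, x ≠ y → c x y = ω x) (x : V) :
    indeg c x + ω x = ∑ y, ω y := by
  rw [indeg, sum_congr rfl fun y hy => hω y x (ne_of_mem_erase hy)]
  exact sum_erase_add _ _ (mem_univ x)

lemma exchangeProportional_of_source {ω : V → ℕ} (hω : ∀ x y : V, x ≠ y → c x y = ω x) :
    ExchangeProportional c := by
  intro S s t hs ht
  have hS : S.card < Fintype.card V := card_lt_univ_of_notMem ht
  have hS0 : 0 < S.card := card_pos.2 ⟨s, hs⟩
  refine ⟨Fintype.card V - 1, Fintype.card V - S.card, by omega, by omega, ?_⟩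
  rw [cutCapacity_exchange_of_add (κ := 0) (ω := fun x => ω x) (fun x y hxy => by
    simp [hω x y hxy, hω y x hxy.symm]) hs ht,
    outdeg_eq_of_source hω, outdeg_eq_of_source hω]
  push_cast [Nat.cast_sub (show 1 ≤ Fintype.card V by omega)]
  ring

lemma indeg_eq_of_target {ω : V → ℕ} (hω : ∀ x y : V, x ≠ y → c x y = ω y) (x : V) :
    indeg c x = (Fintype.card V - 1) * ω x :=
  outdeg_eq_of_source (c := fun x y => c y x) (fun x y hxy => hω y x hxy.symm) x

lemma outdeg_add_of_target {ω : V → ℕ} (hω : ∀ x y : V, x ≠ y → c x y = ω y) (x : V) :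
    outdeg c x + ω x = ∑ y, ω y :=
  indeg_add_of_source (c := fun x y => c y x) (fun x y hxy => hω y x hxy.symm) x

lemma exchangeProportional_of_target {ω : V → ℕ} (hω : ∀ x y : V, x ≠ y → c x y = ω y) :
    ExchangeProportional c := by
  intro S s t hs ht
  refine ⟨1, S.card, one_pos, by exact_mod_cast card_pos.2 ⟨s, hs⟩, ?_⟩
  have hout : ∀ x, (outdeg c x : ℤ) = ∑ y, (ω y : ℤ) - ω x := fun x => by
    rw [eq_sub_iff_add_eq]; exact_mod_cast outdeg_add_of_target hω x
  rw [cutCapacity_exchange_of_add (κ := 0) (ω := fun x => ω x) (fun x y hxy => by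
    simp [hω x y hxy, hω y x hxy.symm]; ring) hs ht, hout, hout]
  ring

lemma outdeg_le_iff_indeg_le_of_balanced {k : ℕ} (hk : ∀ x y : V, x ≠ y → c x y + c y x = k)
    (x y : V) : outdeg c y ≤ outdeg c x ↔ indeg c x ≤ indeg c y := by
  have := outdeg_add_indeg_of_balanced hk x
  have := outdeg_add_indeg_of_balanced hk y
  omega

lemma outdeg_le_iff_indeg_le_of_source (hV : 2 ≤ Fintype.card V) {ω : V → ℕ}
    (hω : ∀ x y : V, x ≠ y → c x y = ω x) (x y : V) :
    outdeg c y ≤ outdeg c x ↔ indeg c x ≤ indeg c y := by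
  rw [outdeg_eq_of_source hω, outdeg_eq_of_source hω, Nat.mul_le_mul_left_iff (by omega)]
  have := indeg_add_of_source hω x
  have := indeg_add_of_source hω y
  omega

lemma outdeg_le_iff_indeg_le_of_target (hV : 2 ≤ Fintype.card V) {ω : V → ℕ}
    (hω : ∀ x y : V, x ≠ y → c x y = ω y) (x y : V) :
    outdeg c y ≤ outdeg c x ↔ indeg c x ≤ indeg c y := by
  rw [indeg_eq_of_target hω, indeg_eq_of_target hω, Nat.mul_le_mul_left_iff (by omega)]
  have := outdeg_add_of_target hω x
  have := outdeg_add_of_target hω y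
  omega

end

/-- On balanced networks, and on networks whose capacities depend only on the
start vertex or only on the end vertex of each arc, the flow relation, the
Borda relation and the dual Borda relation coincide. -/
theorem stmt15 {V : Type*} [Fintype V] [DecidableEq V]
    (hV : 2 ≤ Fintype.card V) (c : V → V → ℕ)
    (hclass :
      (∃ k : ℕ, ∀ x y : V, x ≠ y → c x y + c y x = k) ∨
      (∃ ω₁ : V → ℕ, ∀ x y : V, x ≠ y → c x y = ω₁ x) ∨
      (∃ ω₂ : V → ℕ, ∀ x y : V, x ≠ y → c x y = ω₂ y)) :
    (∀ x y : V, FlowRel c x y ↔ outdeg c y ≤ outdeg c x) ∧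
    (∀ x y : V, FlowRel c x y ↔ indeg c x ≤ indeg c y) := by
  rcases hclass with ⟨k, hk⟩ | ⟨ω, hω⟩ | ⟨ω, hω⟩
  · have h := (exchangeProportional_of_balanced hk).flowRel_iff
    exact ⟨h, fun x y => (h x y).trans (outdeg_le_iff_indeg_le_of_balanced hk x y)⟩
  · have h := (exchangeProportional_of_source hω).flowRel_iff
    exact ⟨h, fun x y => (h x y).trans (outdeg_le_iff_indeg_le_of_source hV hω x y)⟩
  · have h := (exchangeProportional_of_target hω).flowRel_iff
    exact ⟨h, fun x y => (h x y).trans (outdeg_le_iff_indeg_le_of_target hV hω x y)⟩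
end
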